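/- arXiv:cs/0402033 — 3 statements merged into one kernel-verified Lean document; each statement's English description precedes it below -/
import Mathlib

section
/- Soundness of goal rewrite systems: let P be a finite normal program and ⟨Q_L, R_P, →⟩ a goal rewrite system for P. For any literal g and any rewrite sequence g →* T(C₁) ∨ … ∨ T(C_m), there exists, for each i ∈ [1..m], a partial stable model Mᵢ of P such that g ∈ Cᵢ ⊆ Mᵢ. -/
/-!
Rewriting preserves two invariants. The first: no proper prefix of the chain of a literal ends
in a loop, since each of its literals was rewritten by a program rule, and every context is
consistent. A chain that may be rewritten by a program rule, or that is closed by a succeeding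
loop, then has no complementary literals, so the contexts `C₁, …, Cₘ` of the final goal are
consistent.

The second concerns answers, i.e. choices of one disjunct in every disjunction. Every answer
carries a finite tree of rewrite chains rooted at `g` whose literals form its context and each of
whose nodes is an open leaf (a literal still in the goal), a leaf closed by a succeeding loop, or
supported by its children through the completed definition of its atom. A program rule or loop
rule grows or closes the tree at a leaf; the other steps only regroup answers. The answer `T(Cᵢ)`
has no open leaves, and descending its tree shows that every atom of `Cᵢ` is derivable from the
atoms negated in `Cᵢ` (a succeeding loop on an atom crosses a negative literal, so jumping back to
the earlier occurrence terminates) and that every rule of a negated atom of `Cᵢ` has a body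
literal refuted in `Cᵢ`. A consistent set justified in this way extends to a partial stable model.
-/

/-- A rule `a ← b₁,…,b_m, not c₁,…,not c_n` of a normal logic program. -/
structure PRule (α : Type) where
  head : α
  pos : List α
  neg : List α

/-- `Derives P S a` formalizes `P ∪ S ⊢ a`: standard propositional derivation of the
atom `a` from the program `P` together with the set `S` of default negations
(each default negation `not c` treated as a named atom, identified with `c ∈ S`). -/
inductive Derives {α : Type} (P : List (PRule α)) (S : Set α) : α → Prop
  | step (r : PRule α) (hr : r ∈ P)
      (hpos : ∀ b ∈ r.pos, Derives P S b)
      (hneg : ∀ c ∈ r.neg, c ∈ S) :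
      Derives P S r.head

/-- `F_P(S) = { not a | P ∪ S ⊬ a }`, a set of default negations identified with atoms. -/
def FPop {α : Type} (P : List (PRule α)) (S : Set α) : Set α :=
  {a | ¬ Derives P S a}

/-- Literals: an atom or its negation. -/
inductive Lit (α : Type) where
  | pos : α → Lit α
  | neg : α → Lit α
  deriving DecidableEq

namespace Lit
def atom {α : Type} : Lit α → α
  | .pos a => a
  | .neg a => a
def compl {α : Type} : Lit α → Lit α
  | .pos a => .neg a
  | .neg a => .pos a
def isPos {α : Type} : Lit α → Prop
  | .pos _ => True
  | .neg _ => False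
def isNeg {α : Type} : Lit α → Prop
  | .pos _ => False
  | .neg _ => True
end Lit

/-- The partial stable model determined by a set `S` of default negations:
`¬ξ ∈ M` iff `not ξ ∈ S`, and `ξ ∈ M` iff `P ∪ S ⊢ ξ`. -/
def modelOf {α : Type} (P : List (PRule α)) (S : Set α) : Set (Lit α) :=
  {l | ∃ a, (l = Lit.neg a ∧ a ∈ S) ∨ (l = Lit.pos a ∧ Derives P S a)}

/-- `M` is a partial stable model of `P`: it is determined by some `S` with
`F_P²(S) = S` and `S ⊆ F_P(S)`. -/
def IsPSM {α : Type} (P : List (PRule α)) (M : Set (Lit α)) : Prop :=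
  ∃ S : Set α, FPop P (FPop P S) = S ∧ S ⊆ FPop P S ∧ M = modelOf P S

/-- A set of literals is consistent if it contains no complementary pair. -/
def ConsistentSet {α : Type} (C : Set (Lit α)) : Prop :=
  ∀ a : α, ¬ (Lit.pos a ∈ C ∧ Lit.neg a ∈ C)

/-- Goal formulas: `F`, `T(C)` (with context `C`), literals annotated with the list of
their strict ancestors on the rewrite chain leading to them, conjunction and disjunction. -/
inductive GGoal (α : Type) where
  | F : GGoal α
  | T : Set (Lit α) → GGoal α
  | lit : Lit α → List (Lit α) → GGoal α
  | and : GGoal α → GGoal α → GGoal α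
  | or : GGoal α → GGoal α → GGoal α

/-- A positive loop: equal atom endpoints and all literals on the chain atoms. -/
def PosLoop {α : Type} (seg : List (Lit α)) : Prop :=
  2 ≤ seg.length ∧ seg.head? = seg.getLast? ∧ ∀ x ∈ seg, x.isPos

/-- A negative loop: equal negative-literal endpoints and all literals negative. -/
def NegLoop {α : Type} (seg : List (Lit α)) : Prop :=
  2 ≤ seg.length ∧ seg.head? = seg.getLast? ∧ ∀ x ∈ seg, x.isNeg

/-- An odd loop: complementary endpoint literals. -/
def OddLoop {α : Type} (seg : List (Lit α)) : Prop :=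
  2 ≤ seg.length ∧ seg.getLast?.map Lit.compl = seg.head?

/-- An even loop: equal endpoints, neither a positive nor a negative loop. -/
def EvenLoop {α : Type} (seg : List (Lit α)) : Prop :=
  2 ≤ seg.length ∧ seg.head? = seg.getLast? ∧ ¬ PosLoop seg ∧ ¬ NegLoop seg

/-- The chain `c` ends with a failing loop: some suffix `gᵢ ≺⁺ lₙ` is a positive or odd loop. -/
def FailLoopChain {α : Type} (c : List (Lit α)) : Prop :=
  ∃ seg, seg <:+ c ∧ (PosLoop seg ∨ OddLoop seg)

/-- The chain `c` ends with a succeeding loop: some suffix is a negative or even loop. -/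
def SuccLoopChain {α : Type} (c : List (Lit α)) : Prop :=
  ∃ seg, seg <:+ c ∧ (NegLoop seg ∨ EvenLoop seg)

/-- The last literal of the chain `c` is a loop literal. -/
def LoopChain {α : Type} (c : List (Lit α)) : Prop := FailLoopChain c ∨ SuccLoopChain c

/-- The literals of the body of a rule (default negations as negative literals). -/
def bodyLits {α : Type} (r : PRule α) : List (Lit α) :=
  r.pos.map Lit.pos ++ r.neg.map Lit.neg

/-- The rules of `P` with head `a` (giving the completed definition of `a`). -/
def rulesFor {α : Type} [DecidableEq α] (P : List (PRule α)) (a : α) : List (PRule α) :=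
  P.filter (fun r => r.head = a)

/-- Disjunction of a list of goals (`F` if the list is empty). -/
def disjList {α : Type} : List (GGoal α) → GGoal α
  | [] => GGoal.F
  | [g] => g
  | g :: gs => GGoal.or g (disjList gs)

/-- Conjunction of a list of goals; an empty conjunction (empty body, or `¬F`)
is `T(C)` where `C` is the set of literals on the rewrite chain `anc`. -/
def conjList {α : Type} (anc : List (Lit α)) : List (GGoal α) → GGoal α
  | [] => GGoal.T {x | x ∈ anc}
  | [g] => g
  | g :: gs => GGoal.and g (conjList anc gs)

/-- Program rule for a positive literal: `φ` rewrites to `B₁ ∨ … ∨ Bₙ`, where the `Bᵢ`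
are the bodies of the rules with head `φ`; each new literal records the chain `anc`. -/
def posExp {α : Type} [DecidableEq α] (P : List (PRule α)) (anc : List (Lit α)) (a : α) : GGoal α :=
  disjList ((rulesFor P a).map
    (fun r => conjList anc ((bodyLits r).map (fun l => GGoal.lit l anc))))

/-- Program rule for a negative literal: `¬φ` rewrites to `¬B₁ ∧ … ∧ ¬Bₙ`,
where `¬Bᵢ` is the disjunction of the complements of the literals of `Bᵢ`. -/
def negExp {α : Type} [DecidableEq α] (P : List (PRule α)) (anc : List (Lit α)) (a : α) : GGoal α :=
  conjList anc ((rulesFor P a).map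
    (fun r => disjList ((bodyLits r).map (fun l => GGoal.lit l.compl anc))))

/-- One rewrite step of the goal rewrite system `⟨Q_L, R_P, →⟩` for `P`:
program rules (at non-loop literals), simplification rules SR1–SR5',
loop rules LR1 and LR2, applied anywhere inside a goal. -/
inductive GStep {α : Type} [DecidableEq α] (P : List (PRule α)) : GGoal α → GGoal α → Prop
  | litPos (a : α) (anc : List (Lit α)) (h : ¬ LoopChain (anc ++ [Lit.pos a])) :
      GStep P (.lit (.pos a) anc) (posExp P (anc ++ [Lit.pos a]) a)
  | litNeg (a : α) (anc : List (Lit α)) (h : ¬ LoopChain (anc ++ [Lit.neg a])) :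
      GStep P (.lit (.neg a) anc) (negExp P (anc ++ [Lit.neg a]) a)
  | lr1 (l : Lit α) (anc : List (Lit α)) (h : FailLoopChain (anc ++ [l])) :
      GStep P (.lit l anc) .F
  | lr2 (l : Lit α) (anc : List (Lit α)) (h : SuccLoopChain (anc ++ [l])) :
      GStep P (.lit l anc) (.T {x | x ∈ anc ++ [l]})
  | sr1 (g : GGoal α) : GStep P (.or .F g) g
  | sr1' (g : GGoal α) : GStep P (.or g .F) g
  | sr2 (g : GGoal α) : GStep P (.and .F g) .F
  | sr2' (g : GGoal α) : GStep P (.and g .F) .F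
  | sr3 (C₁ C₂ : Set (Lit α)) (h : ConsistentSet (C₁ ∪ C₂)) :
      GStep P (.and (.T C₁) (.T C₂)) (.T (C₁ ∪ C₂))
  | sr4 (C₁ C₂ : Set (Lit α)) (h : ¬ ConsistentSet (C₁ ∪ C₂)) :
      GStep P (.and (.T C₁) (.T C₂)) .F
  | sr5 (g₁ g₂ g₃ : GGoal α) :
      GStep P (.and g₁ (.or g₂ g₃)) (.or (.and g₁ g₂) (.and g₁ g₃))
  | sr5' (g₁ g₂ g₃ : GGoal α) :
      GStep P (.and (.or g₁ g₂) g₃) (.or (.and g₁ g₃) (.and g₂ g₃))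
  | andL (g g' h : GGoal α) : GStep P g g' → GStep P (.and g h) (.and g' h)
  | andR (g h h' : GGoal α) : GStep P h h' → GStep P (.and g h) (.and g h')
  | orL (g g' h : GGoal α) : GStep P g g' → GStep P (.or g h) (.or g' h)
  | orR (g h h' : GGoal α) : GStep P h h' → GStep P (.or g h) (.or g h')

/-- Rewrite sequences: the reflexive-transitive closure of single rewrite steps. -/
def GSteps {α : Type} [DecidableEq α] (P : List (PRule α)) : GGoal α → GGoal α → Prop :=
  Relation.ReflTransGen (GStep P)

/-- The goal `T(C₁) ∨ … ∨ T(Cₘ)`. -/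
def disjTT {α : Type} (Cs : List (Set (Lit α))) : GGoal α :=
  disjList (Cs.map GGoal.T)

/-- The initial goal for a literal `g` (empty rewrite chain so far). -/
def initGoal {α : Type} (g : Lit α) : GGoal α := GGoal.lit g []

section

variable {α : Type}

theorem mem_bodyLits {r : PRule α} {l : Lit α} :
    l ∈ bodyLits r ↔ (∃ b ∈ r.pos, l = .pos b) ∨ (∃ c ∈ r.neg, l = .neg c) := by
  simp [bodyLits, eq_comm]

theorem mem_rulesFor [DecidableEq α] {P : List (PRule α)} {a : α} {r : PRule α} :
    r ∈ rulesFor P a ↔ r ∈ P ∧ r.head = a := by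
  simp [rulesFor]

theorem Derives.mono {P : List (PRule α)} {S S' : Set α} (h : S ⊆ S') {a : α}
    (hd : Derives P S a) : Derives P S' a := by
  induction hd with
  | step r hr _ hneg ih => exact .step r hr ih fun c hc => h (hneg c hc)

theorem FPop_antitone (P : List (PRule α)) : Antitone (FPop P) :=
  fun _ _ h _ ha hd => ha (hd.mono h)

theorem ConsistentSet.compl_not_mem {C : Set (Lit α)} (hC : ConsistentSet C) {x : Lit α}
    (hx : x ∈ C) : x.compl ∉ C := by
  cases x with
  | pos a => exact fun h => hC a ⟨hx, h⟩
  | neg a => exact fun h => hC a ⟨h, hx⟩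

def SupportedBy (P : List (PRule α)) (S : Set (Lit α)) : Lit α → Prop
  | .pos a => ∃ r ∈ P, r.head = a ∧ ∀ l ∈ bodyLits r, l ∈ S
  | .neg a => ∀ r ∈ P, r.head = a → ∃ l ∈ bodyLits r, l.compl ∈ S

theorem SupportedBy.mono {P : List (PRule α)} {S S' : Set (Lit α)} (h : S ⊆ S') {x : Lit α}
    (hx : SupportedBy P S x) : SupportedBy P S' x := by
  cases x with
  | pos a =>
    obtain ⟨r, hr, hh, hb⟩ := hx
    exact ⟨r, hr, hh, fun l hl => h (hb l hl)⟩
  | neg a =>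
    intro r hr hh
    obtain ⟨l, hl, hS⟩ := hx r hr hh
    exact ⟨l, hl, h hS⟩

structure Justified (P : List (PRule α)) (C : Set (Lit α)) : Prop where
  pos_derives : ∀ a, Lit.pos a ∈ C → Derives P {b | Lit.neg b ∈ C} a
  neg_supported : ∀ a, Lit.neg a ∈ C → SupportedBy P C (.neg a)

theorem Justified.not_derives {P : List (PRule α)} {C : Set (Lit α)} (hJ : Justified P C)
    {S : Set α} (hS : ∀ c, Lit.pos c ∈ C → c ∉ S) {a : α} (hd : Derives P S a) :
    Lit.neg a ∉ C := by
  induction hd with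
  | step r hr _ hneg ih =>
    intro ha
    obtain ⟨l, hl, hlC⟩ := hJ.neg_supported _ ha r hr rfl
    rcases mem_bodyLits.1 hl with ⟨b, hb, rfl⟩ | ⟨c, hc, rfl⟩
    · exact ih b hb hlC
    · exact hS c hlC (hneg c hc)

/-- With `N` the atoms false in `C` and `F = FPop P`, the least fixed point `S` of
`X ↦ N ∪ F (F X)` satisfies `F (F S) = S`; since `F S` is another prefixed point, `S ⊆ F S`. -/
theorem Justified.exists_isPSM_superset {P : List (PRule α)} {C : Set (Lit α)}
    (hC : ConsistentSet C) (hJ : Justified P C) : ∃ M, IsPSM P M ∧ C ⊆ M := by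
  set N : Set α := {b | Lit.neg b ∈ C}
  set F := FPop P
  have hF : Antitone F := FPop_antitone P
  have hNF : N ⊆ F N := fun a ha hd => hJ.not_derives (fun c hc hcN => hC c ⟨hc, hcN⟩) hd ha
  have hNFF : N ⊆ F (F N) := fun a ha hd =>
    hJ.not_derives (fun c hc hcF => absurd (hJ.pos_derives c hc) hcF) hd ha
  let f : Set α →o Set α := ⟨fun X => N ∪ F (F X), fun _ _ h => Set.union_subset_union_right _
    (hF (hF h))⟩
  set S := f.lfp
  have hS : N ∪ F (F S) = S := f.map_lfp
  have hNS : N ⊆ S := fun _ ha => hS.subset (.inl ha)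
  have hfix : F (F S) = S := Set.Subset.antisymm (fun _ ha => hS.subset (.inr ha))
    (hS.symm.subset.trans (Set.union_subset (hNFF.trans (hF (hF hNS))) le_rfl))
  have hSFN : S ⊆ F N := f.lfp_le (Set.union_subset hNF (hF hNFF))
  have hSFS : S ⊆ F S := f.lfp_le (Set.union_subset (hNFF.trans (hF hSFN))
    (congrArg F hfix).subset)
  refine ⟨modelOf P S, ⟨S, hfix, hSFS, rfl⟩, fun l hl => ?_⟩
  cases l with
  | neg a => exact ⟨a, .inl ⟨rfl, hNS hl⟩⟩
  | pos a => exact ⟨a, .inr ⟨rfl, (hJ.pos_derives a hl).mono hNS⟩⟩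

theorem not_loopChain_nil : ¬ LoopChain ([] : List (Lit α)) := by
  rintro (⟨seg, hseg, hloop⟩ | ⟨seg, hseg, hloop⟩) <;>
  · rw [List.suffix_nil.1 hseg] at hloop
    rcases hloop with h | h <;> exact absurd h.1 (by simp)

theorem failLoopChain_of_compl_mem {d : List (Lit α)} {x : Lit α} (h : x.compl ∈ d) :
    FailLoopChain (d ++ [x]) := by
  obtain ⟨s, t, rfl⟩ := List.append_of_mem h
  refine ⟨x.compl :: (t ++ [x]), ⟨s, by simp⟩, .inr ⟨by simp, ?_⟩⟩
  rw [← List.cons_append, List.getLast?_concat]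
  rfl

theorem eq_of_suffix_of_head?_eq_getLast? {seg d : List (Lit α)} {x : Lit α}
    (hsuf : seg <:+ d ++ [x]) (hlen : 2 ≤ seg.length) (hends : seg.head? = seg.getLast?) :
    ∃ t mid, seg = x :: (mid ++ [x]) ∧ d = t ++ x :: mid := by
  obtain ⟨t, ht⟩ := hsuf
  rcases seg.eq_nil_or_concat' with rfl | ⟨seg', v, rfl⟩
  · simp at hlen
  have ht' : (t ++ seg') ++ [v] = d ++ [x] := by simpa using ht
  obtain ⟨hd, hv⟩ := List.append_inj' ht' rfl
  obtain rfl : v = x := List.singleton_inj.1 hv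
  rcases seg' with _ | ⟨s, mid⟩
  · simp at hlen
  obtain rfl : s = v := by simpa [List.getLast?_cons] using hends
  exact ⟨t, mid, rfl, hd.symm⟩

theorem SuccLoopChain.exists_eq_append_cons {d : List (Lit α)} {x : Lit α}
    (h : SuccLoopChain (d ++ [x])) :
    ∃ t mid, d = t ++ x :: mid ∧ (x.isNeg ∨ ∃ y ∈ mid, y.isNeg) := by
  obtain ⟨seg, hsuf, hloop | hloop⟩ := h
  · obtain ⟨t, mid, rfl, hd⟩ := eq_of_suffix_of_head?_eq_getLast? hsuf hloop.1 hloop.2.1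
    exact ⟨t, mid, hd, .inl (hloop.2.2 x (by simp))⟩
  · obtain ⟨hlen, hends, hnpos, -⟩ := hloop
    obtain ⟨t, mid, rfl, hd⟩ := eq_of_suffix_of_head?_eq_getLast? hsuf hlen hends
    obtain ⟨z, hz, hzpos⟩ : ∃ z ∈ x :: (mid ++ [x]), ¬ z.isPos := by
      by_contra! hall
      exact hnpos ⟨hlen, hends, hall⟩
    have hzneg : z.isNeg := by cases z <;> simp_all [Lit.isPos, Lit.isNeg]
    simp only [List.mem_cons, List.mem_append, List.not_mem_nil, or_false] at hz
    rcases hz with rfl | hz | rfl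
    · exact ⟨t, mid, hd, .inl hzneg⟩
    · exact ⟨t, mid, hd, .inr ⟨z, hz, hzneg⟩⟩
    · exact ⟨t, mid, hd, .inl hzneg⟩

/-- Every literal of the chain `c` except the last one has been rewritten by a program rule,
which needs the chain up to it not to end in a loop. -/
def ValidChain (c : List (Lit α)) : Prop :=
  ∀ p, p <+: c → p ≠ c → ¬ LoopChain p

theorem ValidChain.snoc {c : List (Lit α)} (hv : ValidChain c) (hc : ¬ LoopChain c)
    (l : Lit α) : ValidChain (c ++ [l]) := by
  intro p hp hne
  rcases List.prefix_concat_iff.1 hp with rfl | hp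
  · exact absurd rfl hne
  · by_cases hpc : p = c
    · exact hpc ▸ hc
    · exact hv p hp hpc

theorem validChain_singleton (l : Lit α) : ValidChain [l] :=
  ValidChain.snoc (c := []) (fun _ hp hne => absurd (List.prefix_nil.1 hp) hne)
    not_loopChain_nil l

theorem ValidChain.of_snoc {c : List (Lit α)} {l : Lit α} (hv : ValidChain (c ++ [l])) :
    ValidChain c ∧ ¬ LoopChain c := by
  refine ⟨fun p hp hne => hv p (hp.trans (List.prefix_append _ _)) ?_,
    hv c (List.prefix_append _ _) (by simp)⟩
  rintro rfl
  simpa using hp.length_le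

theorem consistentSet_snoc {d : List (Lit α)} {x : Lit α} (hd : ConsistentSet {y | y ∈ d})
    (hx : x.compl ∉ d) : ConsistentSet {y | y ∈ d ++ [x]} := by
  rintro a ⟨hp, hn⟩
  simp only [Set.mem_ofPred_eq, List.mem_append, List.mem_singleton] at hp hn
  rcases hp with hp | rfl <;> rcases hn with hn | hn
  · exact hd a ⟨hp, hn⟩
  · exact hx (hn ▸ hp)
  · exact hx hn
  · cases hn

theorem ValidChain.consistentSet {c : List (Lit α)} :
    ValidChain c → ¬ LoopChain c → ConsistentSet {y | y ∈ c} := by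
  induction c using List.reverseRecOn with
  | nil => intro _ _ a h; simp at h
  | append_singleton d x ih =>
    intro hv hc
    obtain ⟨hvd, hd⟩ := hv.of_snoc
    exact consistentSet_snoc (ih hvd hd) fun h => hc (.inl (failLoopChain_of_compl_mem h))

theorem ValidChain.consistentSet_of_succLoopChain {c : List (Lit α)} (hv : ValidChain c)
    (hs : SuccLoopChain c) : ConsistentSet {y | y ∈ c} := by
  rcases c.eq_nil_or_concat' with rfl | ⟨d, x, rfl⟩
  · exact absurd (.inr hs) not_loopChain_nil
  obtain ⟨hvd, hd⟩ := hv.of_snoc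
  have hcons := hvd.consistentSet hd
  obtain ⟨t, mid, rfl, -⟩ := hs.exists_eq_append_cons
  exact consistentSet_snoc hcons (hcons.compl_not_mem (x := x) (by simp))

def GGoal.WellFormed : GGoal α → Prop
  | .F => True
  | .T C => ConsistentSet C
  | .lit l anc => ValidChain (anc ++ [l])
  | .and g₁ g₂ => WellFormed g₁ ∧ WellFormed g₂
  | .or g₁ g₂ => WellFormed g₁ ∧ WellFormed g₂

theorem GGoal.wellFormed_disjList {L : List (GGoal α)} :
    (disjList L).WellFormed ↔ ∀ h ∈ L, h.WellFormed := by
  induction L with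
  | nil => simp [disjList, GGoal.WellFormed]
  | cons g L ih =>
    cases L with
    | nil => simp [disjList]
    | cons g' L' => simp [disjList, GGoal.WellFormed, ih]

theorem GGoal.wellFormed_conjList {ch : List (Lit α)} {L : List (GGoal α)}
    (hch : ConsistentSet {x | x ∈ ch}) (hL : ∀ h ∈ L, h.WellFormed) :
    (conjList ch L).WellFormed := by
  induction L with
  | nil => exact hch
  | cons g L ih =>
    cases L with
    | nil => exact hL g (by simp)
    | cons g' L' => exact ⟨hL g (by simp), ih fun h hh => hL h (.tail _ hh)⟩

theorem GStep.wellFormed [DecidableEq α] {P : List (PRule α)} {h h' : GGoal α}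
    (st : GStep P h h') (hw : h.WellFormed) : h'.WellFormed := by
  induction st with
  | litPos a anc hL =>
    refine GGoal.wellFormed_disjList.2 fun _ hr => ?_
    obtain ⟨r, -, rfl⟩ := List.mem_map.1 hr
    refine GGoal.wellFormed_conjList (hw.consistentSet hL) fun _ hl => ?_
    obtain ⟨l, -, rfl⟩ := List.mem_map.1 hl
    exact hw.snoc hL l
  | litNeg a anc hL =>
    refine GGoal.wellFormed_conjList (hw.consistentSet hL) fun _ hr => ?_
    obtain ⟨r, -, rfl⟩ := List.mem_map.1 hr
    refine GGoal.wellFormed_disjList.2 fun _ hl => ?_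
    obtain ⟨l, -, rfl⟩ := List.mem_map.1 hl
    exact hw.snoc hL l.compl
  | lr2 l anc hS => exact ValidChain.consistentSet_of_succLoopChain hw hS
  | sr1 | sr1' | sr3 | sr5 | sr5' => simp_all [GGoal.WellFormed]
  | lr1 | sr2 | sr2' | sr4 => trivial
  | andL _ _ _ _ ih | orL _ _ _ _ ih => exact ⟨ih hw.1, hw.2⟩
  | andR _ _ _ _ ih | orR _ _ _ _ ih => exact ⟨hw.1, ih hw.2⟩

theorem GSteps.wellFormed [DecidableEq α] {P : List (PRule α)} {h h' : GGoal α}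
    (st : GSteps P h h') (hw : h.WellFormed) : h'.WellFormed := by
  induction st with
  | refl => exact hw
  | tail _ s ih => exact s.wellFormed ih

/-- Choosing one disjunct of every disjunction of a goal leaves a conjunction of contexts and
literals; `C` collects the contexts and the literals on the chains of the literals, `U` those
chains. -/
inductive GGoal.Answer : GGoal α → Set (Lit α) → Set (List (Lit α)) → Prop
  | T (C : Set (Lit α)) : (GGoal.T C).Answer C ∅
  | lit (l : Lit α) (anc : List (Lit α)) :
      (GGoal.lit l anc).Answer {x | x ∈ anc ++ [l]} {anc ++ [l]}
  | and {g₁ g₂ : GGoal α} {C₁ U₁ C₂ U₂} :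
      g₁.Answer C₁ U₁ → g₂.Answer C₂ U₂ → (g₁.and g₂).Answer (C₁ ∪ C₂) (U₁ ∪ U₂)
  | orl {g₁ g₂ : GGoal α} {C U} : g₁.Answer C U → (g₁.or g₂).Answer C U
  | orr {g₁ g₂ : GGoal α} {C U} : g₂.Answer C U → (g₁.or g₂).Answer C U

theorem GGoal.answer_disjList {L : List (GGoal α)} {C : Set (Lit α)}
    {U : Set (List (Lit α))} : (disjList L).Answer C U ↔ ∃ h ∈ L, h.Answer C U := by
  induction L with
  | nil =>
    refine ⟨fun h => ?_, fun ⟨_, hh, _⟩ => absurd hh List.not_mem_nil⟩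
    cases h
  | cons g L ih =>
    cases L with
    | nil => simp [disjList]
    | cons g' L' =>
      refine ⟨fun h => ?_, fun ⟨h, hh, hA⟩ => ?_⟩
      · cases h with
        | orl h => exact ⟨g, by simp, h⟩
        | orr h =>
          obtain ⟨h', hh', hA⟩ := ih.1 h
          exact ⟨h', .tail _ hh', hA⟩
      · rcases List.mem_cons.1 hh with rfl | hh
        · exact .orl hA
        · exact .orr (ih.2 ⟨h, hh, hA⟩)

theorem GGoal.Answer.of_conjList {ι : Type} {ch : List (Lit α)} {L : List ι}
    {f : ι → GGoal α} {R : ι → Lit α → Prop}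
    (hf : ∀ i ∈ L, ∀ C U, (f i).Answer C U →
      ∃ k, R i k ∧ C = {x | x ∈ ch ++ [k]} ∧ U = {ch ++ [k]})
    {C : Set (Lit α)} {U : Set (List (Lit α))} (h : (conjList ch (L.map f)).Answer C U) :
    ∃ ks : List (Lit α), (∀ i ∈ L, ∃ k ∈ ks, R i k) ∧
      C = {x | x ∈ ch ∨ x ∈ ks} ∧ U = {c | ∃ k ∈ ks, c = ch ++ [k]} := by
  induction L generalizing C U with
  | nil =>
    cases h
    exact ⟨[], by simp, by simp, by simp⟩
  | cons i L ih =>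
    cases L with
    | nil =>
      obtain ⟨k, hk, rfl, rfl⟩ := hf i (by simp) C U h
      exact ⟨[k], by simpa using hk, by ext; simp, by ext; simp⟩
    | cons j L' =>
      cases h with
      | and h₁ h₂ =>
        obtain ⟨k, hk, rfl, rfl⟩ := hf i (by simp) _ _ h₁
        obtain ⟨ks, hks, rfl, rfl⟩ := ih (fun i hi => hf i (.tail _ hi)) h₂
        refine ⟨k :: ks, fun i' hi' => ?_, ?_, ?_⟩
        · rcases List.mem_cons.1 hi' with rfl | hi'
          · exact ⟨k, List.mem_cons_self, hk⟩
          · obtain ⟨k', hk', h'⟩ := hks i' hi'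
            exact ⟨k', .tail _ hk', h'⟩
        · ext; simp; tauto
        · ext; simp

theorem GGoal.Answer.of_posExp [DecidableEq α] {P : List (PRule α)} {ch : List (Lit α)}
    {a : α} {C : Set (Lit α)} {U : Set (List (Lit α))} (h : (posExp P ch a).Answer C U) :
    ∃ ks : List (Lit α), SupportedBy P {k | k ∈ ks} (.pos a) ∧
      C = {x | x ∈ ch ∨ x ∈ ks} ∧ U = {c | ∃ k ∈ ks, c = ch ++ [k]} := by
  obtain ⟨_, hmem, hA⟩ := GGoal.answer_disjList.1 h
  obtain ⟨r, hr, rfl⟩ := List.mem_map.1 hmem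
  obtain ⟨ks, hks, hC, hU⟩ := hA.of_conjList (R := Eq) fun l _ C U hl => by
    cases hl
    exact ⟨l, rfl, rfl, rfl⟩
  refine ⟨ks, ⟨r, (mem_rulesFor.1 hr).1, (mem_rulesFor.1 hr).2, fun l hl => ?_⟩, hC, hU⟩
  obtain ⟨k, hk, rfl⟩ := hks l hl
  exact hk

theorem GGoal.Answer.of_negExp [DecidableEq α] {P : List (PRule α)} {ch : List (Lit α)}
    {a : α} {C : Set (Lit α)} {U : Set (List (Lit α))} (h : (negExp P ch a).Answer C U) :
    ∃ ks : List (Lit α), SupportedBy P {k | k ∈ ks} (.neg a) ∧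
      C = {x | x ∈ ch ∨ x ∈ ks} ∧ U = {c | ∃ k ∈ ks, c = ch ++ [k]} := by
  obtain ⟨ks, hks, hC, hU⟩ := h.of_conjList (R := fun r k => ∃ l ∈ bodyLits r, l.compl = k)
    fun r _ C U hr => by
      obtain ⟨_, hmem, hA⟩ := GGoal.answer_disjList.1 hr
      obtain ⟨l, hl, rfl⟩ := List.mem_map.1 hmem
      cases hA
      exact ⟨l.compl, ⟨l, hl, rfl⟩, rfl, rfl⟩
  refine ⟨ks, fun r hr hh => ?_, hC, hU⟩
  obtain ⟨_, hk, l, hl, rfl⟩ := hks r (mem_rulesFor.2 ⟨hr, hh⟩)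
  exact ⟨l, hl, hk⟩

def IsNode (Ch : List (List (Lit α))) (p : List (Lit α)) : Prop := ∃ c ∈ Ch, p <+: c

theorem IsNode.of_prefix {Ch : List (List (Lit α))} {p q : List (Lit α)} (hp : IsNode Ch p)
    (hq : q <+: p) : IsNode Ch q :=
  let ⟨c, hc, hpc⟩ := hp
  ⟨c, hc, hq.trans hpc⟩

theorem IsNode.mono {Ch Ch' : List (List (Lit α))} (h : ∀ c ∈ Ch, c ∈ Ch') {p : List (Lit α)}
    (hp : IsNode Ch p) : IsNode Ch' p :=
  let ⟨c, hc, hpc⟩ := hp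
  ⟨c, h c hc, hpc⟩

/-- A tree of rewrite chains witnessing an answer with context `C` and open leaves `U`; its nodes
are the nonempty prefixes of the chains in `Ch`. -/
structure SupportTree (P : List (PRule α)) (g : Lit α) (C : Set (Lit α))
    (U : Set (List (Lit α))) (Ch : List (List (Lit α))) : Prop where
  root_mem : [g] ∈ Ch
  open_mem : ∀ u ∈ U, u ∈ Ch
  context_eq : C = {x | ∃ c ∈ Ch, x ∈ c}
  supported : ∀ d x, IsNode Ch (d ++ [x]) →
    d ++ [x] ∈ U ∨ SuccLoopChain (d ++ [x]) ∨ SupportedBy P {k | IsNode Ch (d ++ [x] ++ [k])} x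

theorem isNode_append_children {Ch : List (List (Lit α))} {u : List (Lit α)} (hu : u ∈ Ch)
    {ks : List (Lit α)} {p : List (Lit α)} :
    IsNode (Ch ++ ks.map (u ++ [·])) p ↔ IsNode Ch p ∨ ∃ k ∈ ks, p = u ++ [k] := by
  constructor
  · rintro ⟨c, hc, hpc⟩
    rcases List.mem_append.1 hc with hc | hc
    · exact .inl ⟨c, hc, hpc⟩
    obtain ⟨k, hk, rfl⟩ := List.mem_map.1 hc
    rcases List.prefix_concat_iff.1 hpc with rfl | hpu
    · exact .inr ⟨k, hk, rfl⟩
    · exact .inl ⟨u, hu, hpu⟩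
  · rintro (hp | ⟨k, hk, rfl⟩)
    · exact hp.mono fun c hc => List.mem_append_left _ hc
    · exact ⟨u ++ [k], List.mem_append_right _ (List.mem_map_of_mem hk), List.prefix_refl _⟩

theorem lits_append_children {Ch : List (List (Lit α))} {u : List (Lit α)} (hu : u ∈ Ch)
    {ks : List (Lit α)} :
    {x | ∃ c ∈ Ch ++ ks.map (u ++ [·]), x ∈ c} = {x | ∃ c ∈ Ch, x ∈ c} ∪ {x | x ∈ ks} := by
  ext y
  simp only [Set.mem_union, Set.mem_ofPred_eq, List.mem_append, List.mem_map]
  constructor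
  · rintro ⟨c, hc | ⟨k, hk, rfl⟩, hyc⟩
    · exact .inl ⟨c, hc, hyc⟩
    · rcases List.mem_append.1 hyc with hy | hy
      · exact .inl ⟨u, hu, hy⟩
      · exact .inr (List.mem_singleton.1 hy ▸ hk)
  · rintro (⟨c, hc, hyc⟩ | hy)
    · exact ⟨c, .inl hc, hyc⟩
    · exact ⟨u ++ [y], .inr ⟨y, hy, rfl⟩, by simp⟩

theorem SupportTree.expand {P : List (PRule α)} {g : Lit α} {C₀ : Set (Lit α)}
    {U₀ : Set (List (Lit α))} {Ch : List (List (Lit α))} {d ks : List (Lit α)} {x : Lit α}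
    (hT : SupportTree P g ({y | y ∈ d ++ [x]} ∪ C₀) ({d ++ [x]} ∪ U₀) Ch)
    (hx : SuccLoopChain (d ++ [x]) ∨ SupportedBy P {k | k ∈ ks} x) :
    SupportTree P g ({y | y ∈ d ++ [x] ∨ y ∈ ks} ∪ C₀) ({c | ∃ k ∈ ks, c = d ++ [x] ++ [k]} ∪ U₀)
      (Ch ++ ks.map (d ++ [x] ++ [·])) := by
  have hu : d ++ [x] ∈ Ch := hT.open_mem _ (.inl rfl)
  have hsub : ∀ c ∈ Ch, c ∈ Ch ++ ks.map (d ++ [x] ++ [·]) := fun c hc => List.mem_append_left _ hc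
  refine ⟨hsub _ hT.root_mem, ?_, ?_, fun d' x' hp => ?_⟩
  · rintro v (⟨k, hk, rfl⟩ | hv)
    · exact List.mem_append_right _ (List.mem_map_of_mem hk)
    · exact hsub _ (hT.open_mem v (.inr hv))
  · rw [lits_append_children hu, ← hT.context_eq]
    ext y
    simp only [Set.mem_union, Set.mem_ofPred_eq]
    tauto
  rcases (isNode_append_children hu).1 hp with hp | ⟨k, hk, hpk⟩
  · rcases hT.supported d' x' hp with (hpu | hU) | hS | hsup
    · obtain ⟨rfl, hxx⟩ := List.append_inj' hpu rfl
      obtain rfl := List.singleton_inj.1 hxx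
      refine .inr (hx.imp id fun hsup => hsup.mono fun k hk => ?_)
      exact (isNode_append_children hu).2 (.inr ⟨k, hk, rfl⟩)
    · exact .inl (.inr hU)
    · exact .inr (.inl hS)
    · exact .inr (.inr (hsup.mono fun k hk => hk.mono hsub))
  · exact .inl (.inl ⟨k, hk, hpk⟩)

/-- `(C₀, U₀)` is the rest of an answer of which `(C, U)` answers the subgoal being rewritten. -/
def Refines (P : List (PRule α)) (g : Lit α) (C : Set (Lit α)) (U : Set (List (Lit α)))
    (C' : Set (Lit α)) (U' : Set (List (Lit α))) : Prop :=
  ∀ C₀ U₀ Ch, SupportTree P g (C ∪ C₀) (U ∪ U₀) Ch → ∃ Ch', SupportTree P g (C' ∪ C₀) (U' ∪ U₀) Ch'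

section Refines

variable {P : List (PRule α)} {g : Lit α} {C C' C₂ : Set (Lit α)} {U U' U₂ : Set (List (Lit α))}

theorem Refines.rfl : Refines P g C U C U := fun _ _ Ch hT => ⟨Ch, hT⟩

theorem Refines.union_right (h : Refines P g C U C' U') :
    Refines P g (C ∪ C₂) (U ∪ U₂) (C' ∪ C₂) (U' ∪ U₂) := by
  intro C₀ U₀ Ch hT
  simp only [Set.union_assoc] at hT ⊢
  exact h _ _ Ch hT

theorem Refines.union_left (h : Refines P g C U C' U') :
    Refines P g (C₂ ∪ C) (U₂ ∪ U) (C₂ ∪ C') (U₂ ∪ U') := by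
  simpa only [Set.union_comm C₂, Set.union_comm U₂] using h.union_right

theorem refines_expand {d ks : List (Lit α)} {x : Lit α}
    (hx : SuccLoopChain (d ++ [x]) ∨ SupportedBy P {k | k ∈ ks} x) :
    Refines P g {y | y ∈ d ++ [x]} {d ++ [x]} {y | y ∈ d ++ [x] ∨ y ∈ ks}
      {c | ∃ k ∈ ks, c = d ++ [x] ++ [k]} :=
  fun _ _ _ hT => ⟨_, hT.expand hx⟩

end Refines

theorem GStep.exists_refines [DecidableEq α] {P : List (PRule α)} {g : Lit α} {h h' : GGoal α}
    (st : GStep P h h') {C' : Set (Lit α)} {U' : Set (List (Lit α))} (hA : h'.Answer C' U') :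
    ∃ C U, h.Answer C U ∧ Refines P g C U C' U' := by
  induction st generalizing C' U' with
  | litPos a anc =>
    obtain ⟨ks, hks, rfl, rfl⟩ := hA.of_posExp
    exact ⟨_, _, .lit _ _, refines_expand (.inr hks)⟩
  | litNeg a anc =>
    obtain ⟨ks, hks, rfl, rfl⟩ := hA.of_negExp
    exact ⟨_, _, .lit _ _, refines_expand (.inr hks)⟩
  | lr2 l anc hS =>
    cases hA
    exact ⟨_, _, .lit _ _, by simpa using refines_expand (g := g) (ks := []) (.inl hS)⟩
  | lr1 | sr2 | sr2' | sr4 => cases hA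
  | sr1 => exact ⟨_, _, .orr hA, .rfl⟩
  | sr1' => exact ⟨_, _, .orl hA, .rfl⟩
  | sr3 C₁ C₂ =>
    cases hA
    exact ⟨_, _, .and (.T C₁) (.T C₂), by simpa using Refines.rfl⟩
  | sr5 =>
    cases hA with
    | orl hA => cases hA with | and h₁ h₂ => exact ⟨_, _, .and h₁ (.orl h₂), .rfl⟩
    | orr hA => cases hA with | and h₁ h₂ => exact ⟨_, _, .and h₁ (.orr h₂), .rfl⟩
  | sr5' =>
    cases hA with
    | orl hA => cases hA with | and h₁ h₂ => exact ⟨_, _, .and (.orl h₁) h₂, .rfl⟩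
    | orr hA => cases hA with | and h₁ h₂ => exact ⟨_, _, .and (.orr h₁) h₂, .rfl⟩
  | andL _ _ _ _ ih =>
    cases hA with
    | and h₁ h₂ =>
      obtain ⟨C, U, hA₁, hR⟩ := ih h₁
      exact ⟨_, _, .and hA₁ h₂, hR.union_right⟩
  | andR _ _ _ _ ih =>
    cases hA with
    | and h₁ h₂ =>
      obtain ⟨C, U, hA₂, hR⟩ := ih h₂
      exact ⟨_, _, .and h₁ hA₂, hR.union_left⟩
  | orL _ _ _ _ ih =>
    cases hA with
    | orl hA =>
      obtain ⟨C, U, hA, hR⟩ := ih hA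
      exact ⟨C, U, .orl hA, hR⟩
    | orr hA => exact ⟨_, _, .orr hA, .rfl⟩
  | orR _ _ _ _ ih =>
    cases hA with
    | orl hA => exact ⟨_, _, .orl hA, .rfl⟩
    | orr hA =>
      obtain ⟨C, U, hA, hR⟩ := ih hA
      exact ⟨C, U, .orr hA, hR⟩

def GGoal.Supported (P : List (PRule α)) (g : Lit α) (h : GGoal α) : Prop :=
  ∀ C U, h.Answer C U → ∃ Ch, SupportTree P g C U Ch

theorem GSteps.supported [DecidableEq α] {P : List (PRule α)} {g : Lit α} {h h' : GGoal α}
    (st : GSteps P h h') (hs : h.Supported P g) : h'.Supported P g := by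
  induction st with
  | refl => exact hs
  | tail _ s ih =>
    intro C' U' hA
    obtain ⟨C, U, hA, hR⟩ := s.exists_refines hA
    obtain ⟨Ch, hT⟩ := ih C U hA
    simpa using hR ∅ ∅ Ch (by simpa using hT)

theorem supported_initGoal (P : List (PRule α)) (g : Lit α) : (initGoal g).Supported P g := by
  rintro C U ⟨⟩
  refine ⟨[[g]], by simp, by simp, by ext; simp, fun d x hp => .inl ?_⟩
  obtain ⟨c, hc, hpc⟩ := hp
  obtain rfl := List.mem_singleton.1 hc
  rcases (List.prefix_concat_iff (l₂ := [])).1 hpc with h | h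
  · exact h
  · simp at h

def negCount (d : List (Lit α)) : ℕ := d.countP fun x => x matches .neg _

section Extraction

variable {P : List (PRule α)} {g : Lit α} {C : Set (Lit α)} {U : Set (List (Lit α))}
  {Ch : List (List (Lit α))}

theorem SupportTree.mem_of_isNode (hT : SupportTree P g C U Ch) {d : List (Lit α)} {x : Lit α}
    (h : IsNode Ch (d ++ [x])) : x ∈ C := by
  obtain ⟨c, hc, hpc⟩ := h
  rw [hT.context_eq]
  exact ⟨c, hc, hpc.subset (by simp)⟩

theorem SupportTree.exists_isNode_of_mem (hT : SupportTree P g C U Ch) {x : Lit α}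
    (hx : x ∈ C) : ∃ d, IsNode Ch (d ++ [x]) := by
  rw [hT.context_eq] at hx
  obtain ⟨c, hc, hxc⟩ := hx
  obtain ⟨d, e, rfl⟩ := List.append_of_mem hxc
  exact ⟨d, _, hc, e, by simp⟩

/-- Descending to the children of a node keeps the number of negative literals on the chain and
lengthens it; returning from a succeeding loop on an atom to the earlier occurrence of the atom
drops a negative literal. -/
theorem SupportTree.derives_of_isNode (hT : SupportTree P g C ∅ Ch) {M : ℕ}
    (hM : ∀ c ∈ Ch, c.length ≤ M) (d : List (Lit α)) (a : α) (hd : IsNode Ch (d ++ [.pos a])) :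
    Derives P {b | Lit.neg b ∈ C} a := by
  rcases (hT.supported d _ hd).resolve_left (Set.notMem_empty _) with hS | ⟨r, hr, rfl, hbody⟩
  · obtain ⟨t, mid, hdt, hneg | ⟨y, hy, hyneg⟩⟩ := hS.exists_eq_append_cons
    · exact hneg.elim
    have hlt : negCount t < negCount d := by
      have hmid : 0 < negCount mid :=
        List.countP_pos_iff.2 ⟨y, hy, by cases y <;> simp_all [Lit.isNeg]⟩
      simp only [hdt, negCount, List.countP_append, List.countP_cons] at hmid ⊢
      omega
    exact hT.derives_of_isNode hM t a (hd.of_prefix ⟨mid ++ [.pos a], by simp [hdt]⟩)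
  refine .step r hr (fun b hb => ?_) (fun c hc => hT.mem_of_isNode (hbody _ ?_))
  · have hchild : IsNode Ch (d ++ [.pos r.head] ++ [.pos b]) :=
      hbody _ (mem_bodyLits.2 (.inl ⟨b, hb, rfl⟩))
    have hlen : (d ++ [Lit.pos r.head] ++ [Lit.pos b]).length ≤ M :=
      let ⟨c, hc, hpc⟩ := hchild
      hpc.length_le.trans (hM c hc)
    exact hT.derives_of_isNode hM (d ++ [.pos r.head]) b hchild
  · exact mem_bodyLits.2 (.inr ⟨c, hc, rfl⟩)
termination_by (negCount d, M - d.length)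
decreasing_by
  · exact Prod.Lex.left _ _ hlt
  · have hneg : negCount (d ++ [Lit.pos r.head]) = negCount d := by simp [negCount]
    simp only [List.length_append, List.length_singleton] at hlen
    rw [hneg]
    exact Prod.Lex.right _ (by simp; omega)

theorem SupportTree.supportedBy_of_isNode (hT : SupportTree P g C ∅ Ch) (d : List (Lit α))
    (a : α) (hd : IsNode Ch (d ++ [.neg a])) : SupportedBy P C (.neg a) := by
  rcases (hT.supported d _ hd).resolve_left (Set.notMem_empty _) with hS | hsup
  · obtain ⟨t, mid, hdt, -⟩ := hS.exists_eq_append_cons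
    have hlt : t.length < d.length := by simp [hdt]
    exact hT.supportedBy_of_isNode t a (hd.of_prefix ⟨mid ++ [.neg a], by simp [hdt]⟩)
  · exact hsup.mono fun k hk => hT.mem_of_isNode hk
termination_by d.length

theorem SupportTree.justified (hT : SupportTree P g C ∅ Ch) : Justified P C where
  pos_derives a ha :=
    let ⟨d, hd⟩ := hT.exists_isNode_of_mem ha
    hT.derives_of_isNode (fun _ hc => List.le_sum_of_mem (List.mem_map_of_mem hc)) d a hd
  neg_supported a ha :=
    let ⟨d, hd⟩ := hT.exists_isNode_of_mem ha
    hT.supportedBy_of_isNode d a hd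

end Extraction

end

theorem goal_rewrite_soundness_general {α : Type} [DecidableEq α] (P : List (PRule α))
    (g : Lit α) (Cs : List (Set (Lit α)))
    (h : GSteps P (initGoal g) (disjTT Cs)) :
    ∀ C ∈ Cs, ∃ M : Set (Lit α), IsPSM P M ∧ g ∈ C ∧ C ⊆ M := by
  intro C hC
  have hCs : GGoal.T C ∈ Cs.map GGoal.T := List.mem_map_of_mem hC
  have hcons : ConsistentSet C :=
    GGoal.wellFormed_disjList.1 (h.wellFormed (validChain_singleton g)) _ hCs
  obtain ⟨Ch, hT⟩ :=
    h.supported (supported_initGoal P g) C ∅ (GGoal.answer_disjList.2 ⟨_, hCs, .T C⟩)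
  obtain ⟨M, hM, hCM⟩ := hT.justified.exists_isPSM_superset hcons
  exact ⟨M, hM, hT.mem_of_isNode (d := []) ⟨_, hT.root_mem, List.prefix_refl _⟩, hCM⟩

/-- Soundness of goal rewrite systems: for any literal `g` and any rewrite
sequence `g →* T(C₁) ∨ … ∨ T(C_m)`, there exists, for each `i ∈ [1..m]`, a partial
stable model `Mᵢ` of `P` such that `g ∈ Cᵢ ⊆ Mᵢ`. -/
theorem goal_rewrite_soundness {α : Type} [DecidableEq α] (P : List (PRule α))
    (g : Lit α) (Cs : List (Set (Lit α))) (hne : Cs ≠ [])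
    (h : GSteps P (initGoal g) (disjTT Cs)) :
    ∀ C ∈ Cs, ∃ M : Set (Lit α), IsPSM P M ∧ g ∈ C ∧ C ⊆ M :=
  goal_rewrite_soundness_general P g Cs h
end

section
/- Termination: for any finite normal program P, the goal rewrite system ⟨Q_L, R_P, →⟩ is terminating, i.e., there exists no infinite rewrite sequence Q₁ → Q₂ → Q₃ → ⋯. -/
/-!
Termination is proved with a polynomial interpretation into `ℕ`: `F` and `T(C)` weigh `2`,
`∧` multiplies weights and `∨` adds them plus one, so that distribution (SR5) and the
other simplifications strictly decrease the weight. A loop literal weighs `3`, more than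
the `F` or `T(C)` it rewrites to. A non-loop literal weighs `W (k + 1)`, where `k` counts
the literals of the program not yet on its chain: every literal created by expanding it is
either a loop literal or new on the chain, so it weighs at most `W k`, and `W` grows fast
enough for `W (k + 1)` to exceed every expansion built from literals of weight `≤ W k`.
-/

namespace GoalRewrite

variable {α : Type}

/-- The segment from the first occurrence of `l` is a positive, negative or even loop. -/
lemma loopChain_append_of_mem {c : List (Lit α)} {l : Lit α} (hl : l ∈ c) :
    LoopChain (c ++ [l]) := by
  obtain ⟨u, v, rfl⟩ := List.append_of_mem hl
  set seg := l :: v ++ [l]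
  have hsuf : seg <:+ u ++ l :: v ++ [l] := ⟨u, by simp [seg]⟩
  have hlen : 2 ≤ seg.length := by simp [seg]
  have hends : seg.head? = seg.getLast? := by rw [List.getLast?_concat]; rfl
  by_cases hpos : ∀ x ∈ seg, x.isPos
  · exact .inl ⟨seg, hsuf, .inl ⟨hlen, hends, hpos⟩⟩
  by_cases hneg : ∀ x ∈ seg, x.isNeg
  · exact .inr ⟨seg, hsuf, .inl ⟨hlen, hends, hneg⟩⟩
  exact .inr ⟨seg, hsuf, .inr ⟨hlen, hends, fun h => hpos h.2.2, fun h => hneg h.2.2⟩⟩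

def programLits [DecidableEq α] (P : List (PRule α)) : Finset (Lit α) :=
  (P.flatMap fun r => bodyLits r ++ (bodyLits r).map Lit.compl).toFinset

def freshCount [DecidableEq α] (P : List (PRule α)) (c : List (Lit α)) : ℕ :=
  (programLits P \ c.toFinset).card

def bodySize (P : List (PRule α)) : ℕ :=
  (P.map fun r => (bodyLits r).length).sum

/-- The two summands bound the weights of the positive and of the negative expansion of a
literal whose children weigh at most `B` (see `weight_posExp_le`, `weight_negExp_le`). -/
def expansionBound (P : List (PRule α)) (B : ℕ) : ℕ :=
  (P.length + 1) * ((B + 2) ^ (bodySize P + 1) + 2) +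
    ((bodySize P + 1) * (B + 2) + 2) ^ (P.length + 1)

def litWeight (P : List (PRule α)) (k : ℕ) : ℕ :=
  (expansionBound P)^[k] 3

open Classical in
noncomputable def weight [DecidableEq α] (P : List (PRule α)) : GGoal α → ℕ
  | .F => 2
  | .T _ => 2
  | .lit l anc =>
      if LoopChain (anc ++ [l]) then 3 else litWeight P (freshCount P (anc ++ [l]) + 1)
  | .and g h => weight P g * weight P h
  | .or g h => weight P g + weight P h + 1

lemma le_expansionBound (P : List (PRule α)) (B : ℕ) : B ≤ expansionBound P B := by
  have : B + 2 ≤ (B + 2) ^ (bodySize P + 1) := Nat.le_self_pow (by omega) _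
  calc B ≤ (B + 2) ^ (bodySize P + 1) + 2 := by omega
    _ ≤ (P.length + 1) * ((B + 2) ^ (bodySize P + 1) + 2) := Nat.le_mul_of_pos_left _ (by omega)
    _ ≤ expansionBound P B := Nat.le_add_right _ _

lemma litWeight_succ (P : List (PRule α)) (k : ℕ) :
    litWeight P (k + 1) = expansionBound P (litWeight P k) :=
  Function.iterate_succ_apply' _ _ _

lemma litWeight_mono (P : List (PRule α)) : Monotone (litWeight P) :=
  monotone_nat_of_le_succ fun k => (litWeight_succ P k).symm ▸ le_expansionBound P _

lemma three_le_litWeight (P : List (PRule α)) (k : ℕ) : 3 ≤ litWeight P k :=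
  litWeight_mono P (Nat.zero_le k)

variable [DecidableEq α]

lemma two_le_weight (P : List (PRule α)) (g : GGoal α) : 2 ≤ weight P g := by
  induction g with
  | F | T => simp [weight]
  | lit l anc =>
      have := three_le_litWeight P (freshCount P (anc ++ [l]) + 1)
      simp only [weight]
      split <;> omega
  | and g h ihg ihh => simp only [weight]; nlinarith
  | or g h ihg ihh => simp only [weight]; omega

lemma weight_lit_of_loopChain {P : List (PRule α)} {l : Lit α} {anc : List (Lit α)}
    (h : LoopChain (anc ++ [l])) : weight P (.lit l anc) = 3 := by
  simp [weight, h]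

lemma weight_lit_of_not_loopChain {P : List (PRule α)} {l : Lit α} {anc : List (Lit α)}
    (h : ¬ LoopChain (anc ++ [l])) :
    weight P (.lit l anc) = litWeight P (freshCount P (anc ++ [l]) + 1) := by
  simp [weight, h]

lemma mem_programLits {P : List (PRule α)} {r : PRule α} {l : Lit α}
    (hr : r ∈ P) (hl : l ∈ bodyLits r) : l ∈ programLits P := by
  simp only [programLits, List.mem_toFinset, List.mem_flatMap]
  exact ⟨r, hr, List.mem_append_left _ hl⟩

lemma compl_mem_programLits {P : List (PRule α)} {r : PRule α} {l : Lit α}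
    (hr : r ∈ P) (hl : l ∈ bodyLits r) : l.compl ∈ programLits P := by
  simp only [programLits, List.mem_toFinset, List.mem_flatMap]
  exact ⟨r, hr, List.mem_append_right _ (List.mem_map_of_mem hl)⟩

lemma freshCount_append_lt {P : List (PRule α)} {c : List (Lit α)} {l : Lit α}
    (hP : l ∈ programLits P) (hc : l ∉ c) : freshCount P (c ++ [l]) < freshCount P c := by
  rw [freshCount, freshCount, List.toFinset_append, List.toFinset_cons, List.toFinset_nil,
    Finset.union_insert, Finset.union_empty, Finset.sdiff_insert]
  exact Finset.card_erase_lt_of_mem (Finset.mem_sdiff.2 ⟨hP, List.mem_toFinset.not.2 hc⟩)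

lemma weight_lit_le {P : List (PRule α)} {l : Lit α} (c : List (Lit α))
    (hl : l ∈ programLits P) : weight P (.lit l c) ≤ litWeight P (freshCount P c) := by
  by_cases hloop : LoopChain (c ++ [l])
  · rw [weight_lit_of_loopChain hloop]
    exact three_le_litWeight P _
  · rw [weight_lit_of_not_loopChain hloop]
    have hc : l ∉ c := fun hm => hloop (loopChain_append_of_mem hm)
    exact litWeight_mono P (freshCount_append_lt hl hc)

lemma weight_disjList_le {P : List (PRule α)} {gs : List (GGoal α)} {X n : ℕ}
    (hX : ∀ g ∈ gs, weight P g ≤ X) (hn : gs.length ≤ n) :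
    weight P (disjList gs) ≤ (n + 1) * (X + 2) := by
  induction gs generalizing n with
  | nil => simp only [disjList, weight]; nlinarith
  | cons g gs ih =>
      have hg := hX g List.mem_cons_self
      cases gs with
      | nil => simp only [disjList]; nlinarith
      | cons g' gs =>
          obtain ⟨m, rfl⟩ : ∃ m, n = m + 1 := ⟨n - 1, by simp at hn; omega⟩
          have := ih (fun g hg => hX g (List.mem_cons_of_mem _ hg)) (by simpa using hn)
          simp only [disjList, weight]
          nlinarith

lemma weight_conjList_le {P : List (PRule α)} (anc : List (Lit α)) {gs : List (GGoal α)}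
    {X n : ℕ} (hX : ∀ g ∈ gs, weight P g ≤ X) (hn : gs.length ≤ n) :
    weight P (conjList anc gs) ≤ (X + 2) ^ (n + 1) := by
  have hpow : X + 2 ≤ (X + 2) ^ (n + 1) := Nat.le_self_pow n.succ_ne_zero _
  induction gs generalizing n with
  | nil => simp only [conjList, weight]; omega
  | cons g gs ih =>
      have hg := hX g List.mem_cons_self
      cases gs with
      | nil => simp only [conjList]; omega
      | cons g' gs =>
          obtain ⟨m, rfl⟩ : ∃ m, n = m + 1 := ⟨n - 1, by simp at hn; omega⟩
          have := ih (fun g hg => hX g (List.mem_cons_of_mem _ hg)) (by simpa using hn)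
            (Nat.le_self_pow m.succ_ne_zero _)
          simp only [conjList, weight]
          calc weight P g * weight P (conjList anc (g' :: gs))
              ≤ (X + 2) * (X + 2) ^ (m + 1) := Nat.mul_le_mul (by omega) this
            _ = (X + 2) ^ (m + 1 + 1) := (pow_succ' _ _).symm

omit [DecidableEq α] in
lemma length_bodyLits_le {P : List (PRule α)} {r : PRule α} (hr : r ∈ P) :
    (bodyLits r).length ≤ bodySize P :=
  List.le_sum_of_mem (List.mem_map_of_mem hr)

lemma length_rulesFor_le (P : List (PRule α)) (a : α) : (rulesFor P a).length ≤ P.length :=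
  List.length_filter_le _ P

lemma weight_posExp_le (P : List (PRule α)) (c : List (Lit α)) (a : α) :
    weight P (posExp P c a) ≤
      (P.length + 1) * ((litWeight P (freshCount P c) + 2) ^ (bodySize P + 1) + 2) := by
  refine weight_disjList_le ?_ (by simpa using length_rulesFor_le P a)
  simp only [List.mem_map]
  rintro _ ⟨r, hr, rfl⟩
  have hrP := List.mem_of_mem_filter hr
  refine weight_conjList_le c ?_ (by simpa using length_bodyLits_le hrP)
  simp only [List.mem_map]
  rintro _ ⟨l, hl, rfl⟩
  exact weight_lit_le c (mem_programLits hrP hl)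

lemma weight_negExp_le (P : List (PRule α)) (c : List (Lit α)) (a : α) :
    weight P (negExp P c a) ≤
      ((bodySize P + 1) * (litWeight P (freshCount P c) + 2) + 2) ^ (P.length + 1) := by
  refine weight_conjList_le c ?_ (by simpa using length_rulesFor_le P a)
  simp only [List.mem_map]
  rintro _ ⟨r, hr, rfl⟩
  have hrP := List.mem_of_mem_filter hr
  refine weight_disjList_le ?_ (by simpa using length_bodyLits_le hrP)
  simp only [List.mem_map]
  rintro _ ⟨l, hl, rfl⟩
  exact weight_lit_le c (compl_mem_programLits hrP hl)

lemma weight_lt_of_gStep {P : List (PRule α)} {g g' : GGoal α} (h : GStep P g g') :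
    weight P g' < weight P g := by
  induction h with
  | litPos a anc hna =>
      rw [weight_lit_of_not_loopChain hna, litWeight_succ, expansionBound]
      have := weight_posExp_le P (anc ++ [Lit.pos a]) a
      have : 0 < ((bodySize P + 1) * (litWeight P (freshCount P (anc ++ [.pos a])) + 2) + 2) ^
          (P.length + 1) := by positivity
      omega
  | litNeg a anc hna =>
      rw [weight_lit_of_not_loopChain hna, litWeight_succ, expansionBound]
      have := weight_negExp_le P (anc ++ [Lit.neg a]) a
      have : 0 < (P.length + 1) *
          ((litWeight P (freshCount P (anc ++ [.neg a])) + 2) ^ (bodySize P + 1) + 2) := by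
        positivity
      omega
  | lr1 l anc hl => rw [weight_lit_of_loopChain (.inl hl)]; simp [weight]
  | lr2 l anc hl => rw [weight_lit_of_loopChain (.inr hl)]; simp [weight]
  | sr1 | sr1' => simp only [weight]; omega
  | sr2 g | sr2' g => have := two_le_weight P g; simp only [weight]; nlinarith
  | sr3 | sr4 => simp [weight]
  | sr5 g₁ => have := two_le_weight P g₁; simp only [weight]; nlinarith
  | sr5' _ _ g₃ => have := two_le_weight P g₃; simp only [weight]; nlinarith
  | andL g g' h _ ih =>
      have := two_le_weight P h
      simp only [weight]
      exact Nat.mul_lt_mul_of_pos_right ih (by omega)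
  | andR g h h' _ ih =>
      have := two_le_weight P g
      simp only [weight]
      exact Nat.mul_lt_mul_of_pos_left ih (by omega)
  | orL | orR => simp only [weight]; omega

lemma wellFounded_flip_gStep (P : List (PRule α)) : WellFounded (flip (GStep P)) :=
  Subrelation.wf (fun h => weight_lt_of_gStep h) (InvImage.wf (weight P) wellFounded_lt)

end GoalRewrite

/-- Termination: for any finite normal program `P`, the goal rewrite
system `⟨Q_L, R_P, →⟩` is terminating: there is no infinite rewrite sequence
`Q₁ → Q₂ → Q₃ → ⋯`. -/
theorem goal_rewrite_terminating {α : Type} [DecidableEq α] (P : List (PRule α)) :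
    ¬ ∃ f : ℕ → GGoal α, ∀ n : ℕ, GStep P (f n) (f (n + 1)) := by
  rintro ⟨f, hf⟩
  exact (wellFounded_iff_isEmpty_descending_chain.1 (GoalRewrite.wellFounded_flip_gStep P)).elim
    ⟨f, hf⟩
end

section
/- Dependency ordering of subgoals: let l and l' be literals such that l depends on l' but l' does not depend on l. Then l' is never sub-goaled to l during rewriting: in any rewrite sequence with initial goal l', the literal l never occurs on a rewrite chain starting from l'. -/
/-- Atom dependency: `p` depends on `q` if `q` occurs in the body of a rule with head
`p`, or, inductively, `p` depends on some `r` and `q` occurs in the body of a rule with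
head `r`. -/
inductive AtomDep {α : Type} (P : List (PRule α)) : α → α → Prop
  | direct (r : PRule α) (hr : r ∈ P) (q : α) (hq : q ∈ r.pos ∨ q ∈ r.neg) :
      AtomDep P r.head q
  | trans (p s q : α) (h : AtomDep P p s) (r : PRule α) (hr : r ∈ P)
      (hh : r.head = s) (hq : q ∈ r.pos ∨ q ∈ r.neg) : AtomDep P p q

/-- A literal depends on a literal if the atom in the first depends on the atom in the
second. -/
def LitDep {α : Type} (P : List (PRule α)) (l l' : Lit α) : Prop :=
  AtomDep P l.atom l'.atom

/-- The literals occurring on the rewrite chains recorded in a goal. -/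
def chainLits {α : Type} : GGoal α → Set (Lit α)
  | .lit m anc => {x | x ∈ anc ++ [m]}
  | .and g h => chainLits g ∪ chainLits h
  | .or g h => chainLits g ∪ chainLits h
  | _ => ∅

lemma mem_chainLits_disjList {α : Type} {m : Lit α} :
    ∀ {gs : List (GGoal α)}, m ∈ chainLits (disjList gs) → ∃ g ∈ gs, m ∈ chainLits g
  | [], h => by simp [disjList, chainLits] at h
  | [g], h => ⟨g, by simp, h⟩
  | g :: g' :: gs, h => by
    rcases h with h | h
    · exact ⟨g, by simp, h⟩
    · obtain ⟨g₀, hg₀, hm⟩ := mem_chainLits_disjList (gs := g' :: gs) h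
      exact ⟨g₀, List.mem_cons_of_mem _ hg₀, hm⟩

lemma mem_chainLits_conjList {α : Type} {m : Lit α} {anc : List (Lit α)} :
    ∀ {gs : List (GGoal α)}, m ∈ chainLits (conjList anc gs) → ∃ g ∈ gs, m ∈ chainLits g
  | [], h => by simp [conjList, chainLits] at h
  | [g], h => ⟨g, by simp, h⟩
  | g :: g' :: gs, h => by
    rcases h with h | h
    · exact ⟨g, by simp, h⟩
    · obtain ⟨g₀, hg₀, hm⟩ := mem_chainLits_conjList (gs := g' :: gs) h
      exact ⟨g₀, List.mem_cons_of_mem _ hg₀, hm⟩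

lemma atomDep_of_body {α : Type} {P : List (PRule α)} {b : α} {r : PRule α}
    (hr : r ∈ P) (hb : b ∈ r.pos ∨ b ∈ r.neg) {p : α}
    (hp : p = r.head ∨ AtomDep P p r.head) : AtomDep P p b := by
  rcases hp with rfl | hp
  · exact AtomDep.direct r hr b hb
  · exact AtomDep.trans p r.head b hp r hr rfl hb

/-- The key invariant predicate: each chain literal is `l'` or depended-on by `l'`. -/
def GoodFrom {α : Type} (P : List (PRule α)) (l' : Lit α) (g : GGoal α) : Prop :=
  ∀ m ∈ chainLits g, m = l' ∨ LitDep P l' m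

lemma bodyLits_atom {α : Type} {r : PRule α} {lb : Lit α} (h : lb ∈ bodyLits r) :
    lb.atom ∈ r.pos ∨ lb.atom ∈ r.neg := by
  unfold bodyLits at h
  rcases List.mem_append.1 h with h | h <;> obtain ⟨b, hb, rfl⟩ := List.mem_map.1 h
  · exact Or.inl hb
  · exact Or.inr hb

lemma good_exp {α : Type} [DecidableEq α] {P : List (PRule α)} {l' : Lit α}
    {anc : List (Lit α)} {la : Lit α}
    (hgood : GoodFrom P l' (GGoal.lit la anc))
    {m : Lit α}
    (hm : m ∈ anc ++ [la] ∨ ∃ r ∈ rulesFor P la.atom, ∃ lb ∈ bodyLits r, m.atom = lb.atom) :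
    m = l' ∨ LitDep P l' m := by
  have hla : la = l' ∨ LitDep P l' la := hgood la (by simp [chainLits])
  rcases hm with hm | ⟨r, hrP, lb, hlb, hatom⟩
  · rcases List.mem_append.1 hm with hm | hm
    · exact hgood m (by simp [chainLits]; exact Or.inl hm)
    · simp at hm; subst hm; exact hla
  · right
    have hr := List.mem_filter.1 hrP
    have hhead : r.head = la.atom := by
      have := hr.2; simpa using this
    refine atomDep_of_body hr.1 (hatom ▸ bodyLits_atom hlb) ?_
    rcases hla with rfl | hla
    · exact Or.inl hhead.symm
    · exact Or.inr (hhead ▸ hla)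

lemma good_posExp {α : Type} [DecidableEq α] {P : List (PRule α)} {l' : Lit α}
    {anc : List (Lit α)} {a : α}
    (hgood : GoodFrom P l' (GGoal.lit (Lit.pos a) anc)) :
    GoodFrom P l' (posExp P (anc ++ [Lit.pos a]) a) := by
  intro m hm
  obtain ⟨g, hg, hmg⟩ := mem_chainLits_disjList hm
  obtain ⟨r, hr, rfl⟩ := List.mem_map.1 hg
  obtain ⟨g', hg', hmg'⟩ := mem_chainLits_conjList hmg
  obtain ⟨lb, hlb, rfl⟩ := List.mem_map.1 hg'
  have : m ∈ anc ++ [Lit.pos a] ++ [lb] := hmg'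
  rcases List.mem_append.1 this with h | h
  · exact good_exp hgood (Or.inl h)
  · simp at h; subst h
    exact good_exp hgood (Or.inr ⟨r, hr, m, hlb, rfl⟩)

lemma good_negExp {α : Type} [DecidableEq α] {P : List (PRule α)} {l' : Lit α}
    {anc : List (Lit α)} {a : α}
    (hgood : GoodFrom P l' (GGoal.lit (Lit.neg a) anc)) :
    GoodFrom P l' (negExp P (anc ++ [Lit.neg a]) a) := by
  intro m hm
  obtain ⟨g, hg, hmg⟩ := mem_chainLits_conjList hm
  obtain ⟨r, hr, rfl⟩ := List.mem_map.1 hg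
  obtain ⟨g', hg', hmg'⟩ := mem_chainLits_disjList hmg
  obtain ⟨lb, hlb, rfl⟩ := List.mem_map.1 hg'
  have : m ∈ anc ++ [Lit.neg a] ++ [lb.compl] := hmg'
  rcases List.mem_append.1 this with h | h
  · exact good_exp hgood (Or.inl h)
  · simp at h; subst h
    refine good_exp hgood (Or.inr ⟨r, hr, lb, hlb, ?_⟩)
    cases lb <;> rfl

lemma good_step {α : Type} [DecidableEq α] {P : List (PRule α)} {l' : Lit α}
    {g g' : GGoal α} (hs : GStep P g g') (hg : GoodFrom P l' g) : GoodFrom P l' g' := by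
  induction hs with
  | litPos a anc h => exact good_posExp hg
  | litNeg a anc h => exact good_negExp hg
  | lr1 l anc h => intro m hm; simp [chainLits] at hm
  | lr2 l anc h => intro m hm; simp [chainLits] at hm
  | sr1 g => intro m hm; exact hg m (Or.inr hm)
  | sr1' g => intro m hm; exact hg m (Or.inl hm)
  | sr2 g => intro m hm; simp [chainLits] at hm
  | sr2' g => intro m hm; simp [chainLits] at hm
  | sr3 C₁ C₂ h => intro m hm; simp [chainLits] at hm
  | sr4 C₁ C₂ h => intro m hm; simp [chainLits] at hm
  | sr5 g₁ g₂ g₃ =>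
      intro m hm
      rcases hm with (h | h) | (h | h)
      · exact hg m (Or.inl h)
      · exact hg m (Or.inr (Or.inl h))
      · exact hg m (Or.inl h)
      · exact hg m (Or.inr (Or.inr h))
  | sr5' g₁ g₂ g₃ =>
      intro m hm
      rcases hm with (h | h) | (h | h)
      · exact hg m (Or.inl (Or.inl h))
      · exact hg m (Or.inr h)
      · exact hg m (Or.inl (Or.inr h))
      · exact hg m (Or.inr h)
  | andL g g' h _ ih =>
      intro m hm
      rcases hm with h' | h'
      · exact ih (fun x hx => hg x (Or.inl hx)) m h'
      · exact hg m (Or.inr h')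
  | andR g h h' _ ih =>
      intro m hm
      rcases hm with h' | h'
      · exact hg m (Or.inl h')
      · exact ih (fun x hx => hg x (Or.inr hx)) m h'
  | orL g g' h _ ih =>
      intro m hm
      rcases hm with h' | h'
      · exact ih (fun x hx => hg x (Or.inl hx)) m h'
      · exact hg m (Or.inr h')
  | orR g h h' _ ih =>
      intro m hm
      rcases hm with h' | h'
      · exact hg m (Or.inl h')
      · exact ih (fun x hx => hg x (Or.inr hx)) m h'

/-- Dependency ordering of subgoals: if `l` depends on `l'` but `l'`
does not depend on `l`, then `l'` is never sub-goaled to `l` during rewriting: in any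
rewrite sequence with initial goal `l'`, the literal `l` never occurs on a rewrite
chain starting from `l'`. -/
theorem dependency_ordering {α : Type} [DecidableEq α] (P : List (PRule α))
    (l l' : Lit α) (h₁ : LitDep P l l') (h₂ : ¬ LitDep P l' l)
    (Q : GGoal α) (hQ : GSteps P (initGoal l') Q) :
    l ∉ chainLits Q := by
  have hinit : GoodFrom P l' (initGoal l') := by
    intro m hm
    simp [initGoal, chainLits] at hm
    exact Or.inl hm
  have hgood : GoodFrom P l' Q := by
    induction hQ with
    | refl => exact hinit
    | tail _ hs ih => exact good_step hs ih
  intro hl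
  rcases hgood l hl with rfl | hdep
  · exact h₂ h₁
  · exact h₂ hdep
end
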